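/- arXiv:1904.11155 — 5 statements merged into one kernel-verified Lean document; each statement's English description precedes it below -/
import Mathlib

section
/- For a Hessenberg function h : [n] → [n] and the set S_n^h = {w ∈ S_n : w⁻¹(w(j) − 1) ≤ h(j) for all j ∈ [n]} (with the convention w⁻¹(w(j)−1) = 0 when w(j) = 1), the sum of q^{ℓ_h(w)} over w ∈ S_n^h equals the product over j = 1 to n of (1 + q + q² + ... + q^{h(j)−j}), where ℓ_h(w) = #{(j,i) : 1 ≤ j < i ≤ n, w(j) > w(i), i ≤ h(j)}. -/
open Finset Polynomial

/-- `ℓ_h(w) = #{(j,i) : j < i, w j > w i, i ≤ h j}` (0-indexed). -/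
def hessLength {n : ℕ} (h : Fin n → Fin n) (w : Equiv.Perm (Fin n)) : ℕ :=
  (Finset.univ.filter fun p : Fin n × Fin n =>
    p.1 < p.2 ∧ w p.2 < w p.1 ∧ p.2 ≤ h p.1).card

/-- Membership in `S_n^h`: `w⁻¹(w(j) − 1) ≤ h(j)` for all `j`, with the convention that
the condition holds when `w j` is the smallest value. -/
def memSnh {n : ℕ} [NeZero n] (h : Fin n → Fin n) (w : Equiv.Perm (Fin n)) : Prop :=
  ∀ j : Fin n, w j = 0 ∨ w.symm (w j - 1) ≤ h j

instance {n : ℕ} [NeZero n] (h : Fin n → Fin n) : DecidablePred (memSnh h) := fun w =>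
  decidable_of_iff (∀ j : Fin n, w j = 0 ∨ w.symm (w j - 1) ≤ h j) Iff.rfl

/-!
Induct on `n` by splitting off the first entry: a permutation `w` of `Fin (n + 1)` is determined
by `a = w 0` and the standardization `σ` of `w 1, …, w n`, i.e. `w (i + 1) = a.succAbove (σ i)`.
With `h' j = h (j + 1) - 1`, the `h`-inversions of `w` are the `h'`-inversions of `σ` plus the
positions `1 ≤ i ≤ h 0` with `w i < a`; and `w ∈ S^h` iff `σ ∈ S^{h'}` and the value `a - 1`, if
any, sits at a position `≤ h 0` (monotonicity of `h` covers the one adjacency of `σ` broken in `w`).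
For fixed `σ` the admissible `a` are `0` and `σ k + 1` with `k < h 0`, for which the first count is
the rank of `σ k` among `σ 0, …, σ (h 0 - 1)`; so summing over `a` gives `1 + q + ⋯ + q ^ h 0`.
-/

open Equiv

theorem Fin.val_succAbove {n : ℕ} (a : Fin (n + 1)) (v : Fin n) :
    (a.succAbove v : ℕ) = if (v : ℕ) < a then (v : ℕ) else v + 1 := by
  unfold Fin.succAbove; split_ifs <;> simp_all [Fin.lt_def]

theorem Fin.val_succAbove_add_one_eq_self_iff {n : ℕ} (a : Fin (n + 1)) (x : Fin n) :
    (a.succAbove x : ℕ) + 1 = a ↔ (x : ℕ) + 1 = a := by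
  rw [Fin.val_succAbove]
  split_ifs <;> omega

theorem Fin.val_succAbove_add_one_eq_iff {n : ℕ} (a : Fin (n + 1)) (x y : Fin n) :
    (a.succAbove x : ℕ) + 1 = a.succAbove y ↔ (x : ℕ) + 1 = y ∧ (y : ℕ) ≠ a := by
  rw [Fin.val_succAbove, Fin.val_succAbove]
  split_ifs <;> omega

theorem Fin.card_filter_succ_le {n : ℕ} (b : Fin (n + 1)) : #{k : Fin n | k.succ ≤ b} = b := by
  rw [filter_congr fun k _ => by rw [Fin.le_def, Fin.val_succ, Nat.add_one_le_iff],
    Fin.card_filter_val_lt]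
  exact min_eq_right (Nat.lt_succ_iff.1 b.isLt)

theorem Finset.sum_card_filter_le_eq_sum_range {ι β M : Type*} [DecidableEq ι] [LinearOrder β]
    [AddCommMonoid M] (f : ℕ → M) (g : ι → β) (s : Finset ι) (hg : Set.InjOn g s) :
    ∑ x ∈ s, f #{y ∈ s | g y ≤ g x} = ∑ k ∈ range #s, f (k + 1) := by
  induction s using Finset.induction_on_max_value g with
  | empty => simp
  | insert a s ha hmax ih =>
    have hlt : ∀ x ∈ s, g x < g a := fun x hx => (hmax x hx).lt_of_ne fun hxa =>
      ha (hg (mem_insert_of_mem hx) (mem_insert_self a s) hxa ▸ hx)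
    have hrank : ∀ x ∈ s, #{y ∈ insert a s | g y ≤ g x} = #{y ∈ s | g y ≤ g x} := fun x hx => by
      rw [filter_insert, if_neg (hlt x hx).not_ge]
    have htop : #{y ∈ insert a s | g y ≤ g a} = #s + 1 := by
      rw [filter_true_of_mem fun y hy => ?_, card_insert_of_notMem ha]
      rcases mem_insert.1 hy with rfl | hy
      exacts [le_rfl, (hlt y hy).le]
    rw [sum_insert ha, htop, sum_congr rfl fun x hx => by rw [hrank x hx],
      ih (hg.mono (by simp)), card_insert_of_notMem ha, sum_range_succ, add_comm]

def permCons {n : ℕ} (a : Fin (n + 1)) (σ : Perm (Fin n)) : Perm (Fin (n + 1)) :=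
  (finSuccEquiv n).trans ((optionCongr σ).trans (finSuccEquiv' a).symm)

section permCons

variable {n : ℕ} (a : Fin (n + 1)) (σ : Perm (Fin n))

@[simp] theorem permCons_zero : permCons a σ 0 = a := by simp [permCons]

@[simp] theorem permCons_succ (i : Fin n) : permCons a σ i.succ = a.succAbove (σ i) := by
  simp [permCons]

theorem permCons_bijective :
    Function.Bijective fun p : Fin (n + 1) × Perm (Fin n) => permCons p.1 p.2 := by
  refine (Fintype.bijective_iff_injective_and_card _).2 ⟨?_, ?_⟩
  · rintro ⟨a, σ⟩ ⟨b, τ⟩ he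
    have hab : a = b := by simpa using congr($he 0)
    subst hab
    refine Prod.ext rfl (Perm.ext fun i => (Fin.succAbove_right_injective (p := a) ?_))
    simpa using congr($he i.succ)
  · simp [Fintype.card_perm, Nat.factorial_succ]

end permCons

-- `S_n^h` without subtraction in `Fin n`, so that it also makes sense for `n = 0`.
def IsHessPerm {n : ℕ} (h : Fin n → Fin n) (w : Perm (Fin n)) : Prop :=
  ∀ i j, (w i : ℕ) + 1 = w j → i ≤ h j

instance {n : ℕ} (h : Fin n → Fin n) : DecidablePred (IsHessPerm h) := fun _ => by
  unfold IsHessPerm; infer_instance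

theorem memSnh_iff_isHessPerm {n : ℕ} [NeZero n] (h : Fin n → Fin n) (w : Perm (Fin n)) :
    memSnh h w ↔ IsHessPerm h w := by
  refine ⟨fun hw i j hij => ?_, fun hw j => or_iff_not_imp_left.2 fun hj => hw _ _ ?_⟩
  · have hj : w j ≠ 0 := fun h0 => by simp [h0] at hij
    have hsub : w j - 1 = w i := Fin.ext (by rw [Fin.val_sub_one_of_ne_zero hj]; omega)
    simpa [hsub] using (hw j).resolve_left hj
  · have := Fin.val_ne_zero_iff.2 hj
    rw [apply_symm_apply, Fin.val_sub_one_of_ne_zero hj]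
    omega

def hessTail {n : ℕ} (h : Fin (n + 1) → Fin (n + 1)) (j : Fin n) : Fin n :=
  ⟨(h j.succ : ℕ) - 1, by have := (h j.succ).isLt; have := j.isLt; omega⟩

section hessTail

variable {n : ℕ} {h : Fin (n + 1) → Fin (n + 1)}

theorem hessTail_monotone (hmono : Monotone h) : Monotone (hessTail h) := fun i j hij => by
  have := Fin.le_def.1 (hmono (Fin.succ_le_succ_iff.2 hij))
  simp only [hessTail, Fin.le_def]
  omega

theorem succ_le_iff_le_hessTail (hge : ∀ j, j ≤ h j) (k j : Fin n) :
    k.succ ≤ h j.succ ↔ k ≤ hessTail h j := by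
  have := Fin.le_def.1 (hge j.succ)
  simp only [hessTail, Fin.le_def, Fin.val_succ] at this ⊢
  omega

theorem le_hessTail (hge : ∀ j, j ≤ h j) (j : Fin n) : j ≤ hessTail h j :=
  (succ_le_iff_le_hessTail hge j j).1 (hge j.succ)

theorem hessLength_permCons (hge : ∀ j, j ≤ h j) (a : Fin (n + 1)) (σ : Perm (Fin n)) :
    hessLength h (permCons a σ) =
      #{k : Fin n | (σ k).castSucc < a ∧ k.succ ≤ h 0} + hessLength (hessTail h) σ := by
  simp only [hessLength, card_filter, Fintype.sum_prod_type, Fin.sum_univ_succ, permCons_zero,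
    permCons_succ, Fin.not_lt_zero, false_and, if_false, zero_add,
    Fin.succ_pos, true_and, Fin.succ_lt_succ_iff, Fin.succAbove_lt_succAbove_iff,
    Fin.succAbove_lt_iff_castSucc_lt, succ_le_iff_le_hessTail hge]

theorem isHessPerm_permCons_iff (hmono : Monotone h) (hge : ∀ j, j ≤ h j) (a : Fin (n + 1))
    (σ : Perm (Fin n)) :
    IsHessPerm h (permCons a σ) ↔
      IsHessPerm (hessTail h) σ ∧ ∀ k, (σ k : ℕ) + 1 = a → k.succ ≤ h 0 := by
  constructor
  · intro hw
    have hzero : ∀ k, (σ k : ℕ) + 1 = a → k.succ ≤ h 0 := fun k hk =>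
      hw k.succ 0 (by simpa [Fin.val_succAbove_add_one_eq_self_iff] using hk)
    refine ⟨fun k l hkl => (succ_le_iff_le_hessTail hge k l).1 ?_, hzero⟩
    by_cases hla : (σ l : ℕ) = a
    · exact (hzero k (hkl.trans hla)).trans (hmono (Fin.zero_le _))
    · exact hw k.succ l.succ (by simpa [Fin.val_succAbove_add_one_eq_iff] using ⟨hkl, hla⟩)
  · rintro ⟨hσ, hzero⟩ i j hij
    induction i using Fin.cases with
    | zero => induction j using Fin.cases with
      | zero => simp at hij
      | succ l => exact Fin.zero_le _
    | succ k => induction j using Fin.cases with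
      | zero => exact hzero k (by simpa [Fin.val_succAbove_add_one_eq_self_iff] using hij)
      | succ l =>
        simp only [permCons_succ, Fin.val_succAbove_add_one_eq_iff] at hij
        exact (succ_le_iff_le_hessTail hge k l).2 (hσ k l hij.1)

end hessTail

theorem sum_pow_card_castSucc_lt {R : Type*} [Semiring R] (q : R) {n : ℕ} (σ : Perm (Fin n))
    (b : Fin (n + 1)) :
    ∑ a ∈ univ.filter fun a : Fin (n + 1) => ∀ k, (σ k : ℕ) + 1 = a → k.succ ≤ b,
        q ^ #{k | (σ k).castSucc < a ∧ k.succ ≤ b} =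
      ∑ k ∈ range (b + 1), q ^ k := by
  have hadm : ∀ k₀, (∀ k, (σ k : ℕ) + 1 = (σ k₀).succ → k.succ ≤ b) ↔ k₀.succ ≤ b := fun k₀ =>
    ⟨fun H => H k₀ (Fin.val_succ _).symm, fun H k hk => by
      obtain rfl : k = k₀ := σ.injective (Fin.ext (by simpa using hk))
      exact H⟩
  rw [sum_filter, Fin.sum_univ_succ]
  conv_lhs => enter [2]; rw [← Equiv.sum_comp σ]
  simp only [Fin.val_zero, Nat.add_one_ne_zero, IsEmpty.forall_iff, implies_true, if_true,
    Fin.not_lt_zero, false_and, filter_false, card_empty, pow_zero, hadm, Fin.castSucc_lt_succ_iff]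
  rw [← sum_filter, sum_range_succ', pow_zero, add_comm]
  congr 1
  simp_rw [and_comm (a := σ _ ≤ _), ← filter_filter]
  rw [sum_card_filter_le_eq_sum_range (q ^ ·) σ _ σ.injective.injOn, Fin.card_filter_succ_le]

theorem sum_pow_hessLength_succ {R : Type*} [CommSemiring R] (q : R) {n : ℕ}
    {h : Fin (n + 1) → Fin (n + 1)} (hmono : Monotone h) (hge : ∀ j, j ≤ h j) :
    ∑ w with IsHessPerm h w, q ^ hessLength h w =
      (∑ k ∈ range (h 0 + 1), q ^ k) *
        ∑ σ with IsHessPerm (hessTail h) σ, q ^ hessLength (hessTail h) σ := by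
  rw [sum_filter, ← Fintype.sum_bijective _ permCons_bijective _ _ fun _ => rfl,
    Fintype.sum_prod_type_right, sum_filter, mul_sum]
  refine sum_congr rfl fun σ _ => ?_
  simp only [isHessPerm_permCons_iff hmono hge, hessLength_permCons hge, pow_add, ite_and]
  split_ifs with hσ
  · rw [← sum_pow_card_castSucc_lt q σ (h 0), sum_filter, sum_mul]
    simp only [ite_mul, zero_mul]
  · simp

theorem sum_pow_hessLength_eq_prod {R : Type*} [CommSemiring R] (q : R) {n : ℕ}
    (h : Fin n → Fin n) (hmono : Monotone h) (hge : ∀ j, j ≤ h j) :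
    ∑ w with IsHessPerm h w, q ^ hessLength h w =
      ∏ j, ∑ k ∈ range (h j - j + 1), q ^ k := by
  induction n with
  | zero => simp [hessLength, IsHessPerm]
  | succ n ih =>
    rw [sum_pow_hessLength_succ q hmono hge, ih _ (hessTail_monotone hmono) (le_hessTail hge),
      Fin.prod_univ_succ]
    simp [hessTail, Nat.sub_sub, Nat.add_comm 1]

/-- `Σ_{w ∈ S_n^h} q^{ℓ_h(w)} = Π_{j=1}^{n} (1 + q + ⋯ + q^{h(j)−j})` in `ℤ[q]`. -/
theorem sum_Snh_q_pow_eq_prod (n : ℕ) [NeZero n] (h : Fin n → Fin n)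
    (hmono : Monotone h) (hge : ∀ j, j ≤ h j) :
    ∑ w ∈ Finset.univ.filter (memSnh h), (X : ℤ[X]) ^ hessLength h w =
      ∏ j : Fin n, ∑ k ∈ Finset.range ((h j : ℕ) - (j : ℕ) + 1), (X : ℤ[X]) ^ k := by
  rw [filter_congr fun w _ => memSnh_iff_isHessPerm h w]
  exact sum_pow_hessLength_eq_prod X h hmono hge
end

section
/- For any Hessenberg function h : [n] → [n], the sum of q^{ℓ_h(w)} over all w ∈ S_n is a palindromic polynomial of degree m = Σ_{j=1}^n (h(j) − j); that is, the coefficient of q^k equals the coefficient of q^{m−k} for all k. -/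
/-!
Write `m = ∑ j, (h j - j)` for the number of pairs `j < i ≤ h j`. Composing `w` with the
reversal `w₀ : i ↦ n - 1 - i` turns every comparison `w i < w j` around, so it exchanges the
`h`-inversions of `w` with its `h`-non-inversions: `ℓ_h(w₀ w) = m - ℓ_h(w)`. This bijection of
`S_n` makes `∑_w q^{ℓ_h(w)}` palindromic, and `ℓ_h(w₀) = m` makes `m` its degree.
-/

open Finset Polynomial

namespace Polynomial

variable {R α : Type*} [Semiring R]

theorem coeff_sum_X_pow (s : Finset α) (f : α → ℕ) (k : ℕ) :
    (∑ a ∈ s, (X : R[X]) ^ f a).coeff k = #{a ∈ s | f a = k} := by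
  simp only [finsetSum_coeff, coeff_X_pow, natCast_card_filter, eq_comm]

variable [Fintype α] {f : α → ℕ} {m : ℕ}

theorem coeff_sum_X_pow_sub (σ : α ≃ α) (hσ : ∀ a, f (σ a) = m - f a)
    (hle : ∀ a, f a ≤ m) {k : ℕ} (hk : k ≤ m) :
    (∑ a, (X : R[X]) ^ f a).coeff k = (∑ a, (X : R[X]) ^ f a).coeff (m - k) := by
  conv_rhs => rw [← σ.sum_comp]
  rw [coeff_sum_X_pow, coeff_sum_X_pow]
  congr 2
  ext a
  have := hle a
  simp only [hσ, mem_filter, mem_univ, true_and]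
  omega

theorem natDegree_sum_X_pow [CharZero R] (hle : ∀ a, f a ≤ m) {a₀ : α}
    (ha₀ : f a₀ = m) : (∑ a, (X : R[X]) ^ f a).natDegree = m := by
  refine natDegree_eq_of_le_of_coeff_ne_zero
    (natDegree_sum_le_of_forall_le _ _ fun a _ => (natDegree_X_pow_le _).trans (hle a)) ?_
  rw [coeff_sum_X_pow, Nat.cast_ne_zero, ← pos_iff_ne_zero, card_pos]
  exact ⟨a₀, by simp [ha₀]⟩

end Polynomial

theorem Fin.card_filter_rev_lt {α : Type*} {n : ℕ} (s : Finset (α × α))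
    (hs : ∀ p ∈ s, p.1 ≠ p.2) {w : α → Fin n} (hw : Function.Injective w) :
    #{p ∈ s | rev (w p.2) < rev (w p.1)} = #s - #{p ∈ s | w p.2 < w p.1} := by
  have hcompl : {p ∈ s | rev (w p.2) < rev (w p.1)} = {p ∈ s | ¬ w p.2 < w p.1} := by
    refine filter_congr fun p hp => ?_
    rw [rev_lt_rev, not_lt]
    exact ⟨le_of_lt, fun hle => hle.lt_of_ne (hw.ne (hs p hp))⟩
  have := card_filter_add_card_filter_not (s := s) fun p => w p.2 < w p.1
  rw [hcompl]
  omega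

section Hessenberg

variable {n : ℕ} (h : Fin n → Fin n)

def hessPairs : Finset (Fin n × Fin n) :=
  {p | p.1 < p.2 ∧ p.2 ≤ h p.1}

theorem card_hessPairs : #(hessPairs h) = ∑ j : Fin n, ((h j : ℕ) - (j : ℕ)) := by
  rw [hessPairs, card_filter, Fintype.sum_prod_type]
  refine sum_congr rfl fun j _ => ?_
  rw [← card_filter, ← Fin.card_Ioc]
  congr 1
  ext i
  simp

theorem hessLength_eq_card_filter (w : Equiv.Perm (Fin n)) :
    hessLength h w = #{p ∈ hessPairs h | w p.2 < w p.1} := by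
  rw [hessLength, hessPairs, filter_filter]
  congr 1
  ext p
  simp only [mem_filter, mem_univ, true_and]
  tauto

theorem hessLength_le_card_hessPairs (w : Equiv.Perm (Fin n)) :
    hessLength h w ≤ #(hessPairs h) := by
  rw [hessLength_eq_card_filter]
  exact card_filter_le _ _

theorem hessLength_revPerm_mul (w : Equiv.Perm (Fin n)) :
    hessLength h (Fin.revPerm * w) = #(hessPairs h) - hessLength h w := by
  rw [hessLength_eq_card_filter, hessLength_eq_card_filter]
  simp only [Equiv.Perm.mul_apply, Fin.revPerm_apply]
  exact Fin.card_filter_rev_lt _ (fun p hp => (mem_filter.1 hp).2.1.ne) w.injective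

theorem hessLength_one : hessLength h 1 = 0 := by
  rw [hessLength_eq_card_filter, card_eq_zero, filter_eq_empty_iff]
  intro p hp
  exact (mem_filter.1 hp).2.1.asymm

theorem hessLength_revPerm : hessLength h Fin.revPerm = #(hessPairs h) := by
  simpa [hessLength_one] using hessLength_revPerm_mul h 1

end Hessenberg

theorem sum_q_pow_hessLength_palindromic_general (n : ℕ) (h : Fin n → Fin n) :
    (∑ w : Equiv.Perm (Fin n), (X : ℤ[X]) ^ hessLength h w).natDegree =
        ∑ j : Fin n, ((h j : ℕ) - (j : ℕ)) ∧
    ∀ k ≤ ∑ j : Fin n, ((h j : ℕ) - (j : ℕ)),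
      (∑ w : Equiv.Perm (Fin n), (X : ℤ[X]) ^ hessLength h w).coeff k =
        (∑ w : Equiv.Perm (Fin n), (X : ℤ[X]) ^ hessLength h w).coeff
          ((∑ j : Fin n, ((h j : ℕ) - (j : ℕ))) - k) := by
  rw [← card_hessPairs]
  exact ⟨natDegree_sum_X_pow (hessLength_le_card_hessPairs h) (hessLength_revPerm h),
    fun k hk => coeff_sum_X_pow_sub (Equiv.mulLeft Fin.revPerm) (hessLength_revPerm_mul h)
      (hessLength_le_card_hessPairs h) hk⟩

/-- For any Hessenberg function `h`, the polynomial `Σ_{w ∈ S_n} q^{ℓ_h(w)}` is a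
palindromic polynomial of degree `m = Σ_j (h(j) − j)`: its coefficient of `q^k` equals
its coefficient of `q^{m−k}` for all `k ≤ m` (and `m` is its degree). -/
theorem sum_q_pow_hessLength_palindromic (n : ℕ) (h : Fin n → Fin n)
    (hmono : Monotone h) (hge : ∀ j, j ≤ h j) :
    (∑ w : Equiv.Perm (Fin n), (X : ℤ[X]) ^ hessLength h w).natDegree =
        ∑ j : Fin n, ((h j : ℕ) - (j : ℕ)) ∧
    ∀ k ≤ ∑ j : Fin n, ((h j : ℕ) - (j : ℕ)),
      (∑ w : Equiv.Perm (Fin n), (X : ℤ[X]) ^ hessLength h w).coeff k =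
        (∑ w : Equiv.Perm (Fin n), (X : ℤ[X]) ^ hessLength h w).coeff
          ((∑ j : Fin n, ((h j : ℕ) - (j : ℕ))) - k) :=
  sum_q_pow_hessLength_palindromic_general n h
end

section
/- For n = 3, the ideal of ℚ[x₁,x₂,x₃] generated by f_{3,1} = (x₁−x₂)(x₁−x₃)x₁, f_{3,2} = (x₁−x₃)x₁ + (x₂−x₃)x₂, and f_{3,3} = x₁+x₂+x₃ equals the ideal generated by the elementary symmetric polynomials e₁, e₂, e₃ in x₁, x₂, x₃. -/
/-!
Modulo `e₁` the generators are a unitriangular change of `e₂, e₃`: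
`f_{3,2} = (x₁ + x₂) e₁ - 2 e₂` and `f_{3,1} = x₁² e₁ - 2 x₁ e₂ + 3 e₃`.
Since `2` and `3` are units over `ℚ`, the generators can be exchanged one at a time.
-/

open MvPolynomial

theorem Ideal.span_insert_eq_of_eq_mul_add {R : Type*} [CommRing R] {s : Set R} {x z u a : R}
    (hx : x = u * z + a) (hu : IsUnit u) (ha : a ∈ Ideal.span s) :
    Ideal.span (insert x s) = Ideal.span (insert z s) := by
  obtain ⟨u, rfl⟩ := hu
  have hs : ∀ y, Ideal.span s ≤ Ideal.span (insert y s) := fun y =>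
    Ideal.span_mono (Set.subset_insert y s)
  apply le_antisymm <;> rw [Ideal.span_le, Set.insert_subset_iff] <;>
    refine ⟨?_, Ideal.subset_span.trans (hs _)⟩
  · rw [hx]
    exact add_mem (Ideal.mul_mem_left _ _ (Ideal.subset_span (Set.mem_insert z s))) (hs z ha)
  · rw [show z = ↑u⁻¹ * (x - a) by rw [hx, add_sub_cancel_right, Units.inv_mul_cancel_left]]
    exact Ideal.mul_mem_left _ _
      (sub_mem (Ideal.subset_span (Set.mem_insert x s)) (hs x ha))

/-- In `ℚ[x₁,x₂,x₃]`, the ideal `(f_{3,1}, f_{3,2}, f_{3,3})` with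
`f_{3,1} = (x₁−x₂)(x₁−x₃)x₁`, `f_{3,2} = (x₁−x₃)x₁ + (x₂−x₃)x₂`,
`f_{3,3} = x₁+x₂+x₃` equals the ideal `(e₁, e₂, e₃)` generated by the elementary
symmetric polynomials. -/
theorem ideal_f_eq_ideal_elementarySymmetric :
    Ideal.span ({(X 0 - X 1) * (X 0 - X 2) * X 0,
        (X 0 - X 2) * X 0 + (X 1 - X 2) * X 1,
        X 0 + X 1 + X 2} : Set (MvPolynomial (Fin 3) ℚ)) =
      Ideal.span ({X 0 + X 1 + X 2,
        X 0 * X 1 + X 0 * X 2 + X 1 * X 2,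
        X 0 * X 1 * X 2} : Set (MvPolynomial (Fin 3) ℚ)) := by
  set e₁ : MvPolynomial (Fin 3) ℚ := X 0 + X 1 + X 2
  set e₂ : MvPolynomial (Fin 3) ℚ := X 0 * X 1 + X 0 * X 2 + X 1 * X 2
  set e₃ : MvPolynomial (Fin 3) ℚ := X 0 * X 1 * X 2
  have h₂ : IsUnit (2 : MvPolynomial (Fin 3) ℚ) := by
    simpa only [map_ofNat] using (IsUnit.mk0 (2 : ℚ) two_ne_zero).map C
  have h₃ : IsUnit (3 : MvPolynomial (Fin 3) ℚ) := by
    simpa only [map_ofNat] using (IsUnit.mk0 (3 : ℚ) three_ne_zero).map C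
  calc _ = Ideal.span {(X 0 - X 1) * (X 0 - X 2) * X 0, e₂, e₁} := by
        rw [Set.insert_comm, Ideal.span_insert_eq_of_eq_mul_add (u := -2) (z := e₂)
          (a := (X 0 + X 1) * e₁) (by ring) h₂.neg
          (Ideal.mul_mem_left _ _ (Ideal.subset_span (by simp))),
          Set.insert_comm]
    _ = Ideal.span {e₃, e₂, e₁} :=
        Ideal.span_insert_eq_of_eq_mul_add (u := 3) (a := X 0 ^ 2 * e₁ - 2 * X 0 * e₂) (by ring) h₃
          (sub_mem (Ideal.mul_mem_left _ _ (Ideal.subset_span (by simp)))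
            (Ideal.mul_mem_left _ _ (Ideal.subset_span (by simp))))
    _ = _ := by rw [Set.insert_comm, Set.pair_comm, Set.insert_comm]
end

section
/- For the ideal arrangement A_h with h = (2,3,3) in V = {(x₁,x₂,x₃) ∈ ℝ³ : x₁+x₂+x₃ = 0}, consisting of the hyperplanes {x₁ = x₂} and {x₂ = x₃}, the ideal 𝔞(h) = {θ(Q) : θ ∈ D(A_h)} ⊂ Sym(V*) with Q = x₁²+x₂²+x₃² equals the ideal generated by (the images in Sym(V*) of) f_{2,1} = (x₁−x₂)x₁, f_{3,2} = (x₁−x₃)x₁+(x₂−x₃)x₂, and f_{3,3} = x₁+x₂+x₃. -/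
/-!
Since `x₁ + x₂ + x₃ = 0` in `R`, every derivation satisfies
`θ Q = 2 (x₁ θ(x₁ - x₂) - x₃ θ(x₂ - x₃))`, and the values `θ(x₁ - x₂)`, `θ(x₂ - x₃)` can be
prescribed freely. So `𝔞(h)` is generated by `(x₁ - x₂) x₁` and `(x₂ - x₃) x₃`, and this is the
stated ideal because `f_{3,2} ≡ f_{2,1} - (x₂ - x₃) x₃` modulo `f_{3,3}`.
-/

open MvPolynomial

/-- The linear relation ideal `(x₁+x₂+x₃)`. -/
noncomputable def relI : Ideal (MvPolynomial (Fin 3) ℝ) :=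
  Ideal.span {(X 0 + X 1 + X 2 : MvPolynomial (Fin 3) ℝ)}

/-- The coordinate ring `R = Sym(V*) ≅ ℝ[x₁,x₂,x₃]/(x₁+x₂+x₃)`. -/
noncomputable abbrev SymV : Type := MvPolynomial (Fin 3) ℝ ⧸ relI

/-- The image of `x_i` in `R`. -/
noncomputable def xx (i : Fin 3) : SymV := Ideal.Quotient.mk relI (X i)

/-- `θ` belongs to the logarithmic derivation module `D(A_h)` of the ideal arrangement
`A_h = {x₁ = x₂, x₂ = x₃}` for `h = (2,3,3)`. -/
def memD (θ : Derivation ℝ SymV SymV) : Prop :=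
  θ (xx 0 - xx 1) ∈ Ideal.span {xx 0 - xx 1} ∧
  θ (xx 1 - xx 2) ∈ Ideal.span {xx 1 - xx 2}

namespace Derivation

variable {R A : Type*} [CommRing R] [CommRing A] [Algebra R A]

theorem map_eq_zero_of_mem_span {I : Ideal A} {S : Set A} (hSI : S ⊆ I)
    (D : Derivation R A (A ⧸ I)) (hD : ∀ s ∈ S, D s = 0) {x : A} (hx : x ∈ Ideal.span S) :
    D x = 0 := by
  induction hx using Submodule.span_induction with
  | mem s hs => exact hD s hs
  | zero => exact D.map_zero
  | add x y _ _ hx hy => rw [D.map_add, hx, hy, add_zero]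
  | smul a x hxI hx =>
    -- `x • D a` vanishes because `x` acts on `A ⧸ I` through its class, which is zero
    rw [smul_eq_mul, D.leibniz, hx, smul_zero, zero_add, Algebra.smul_def,
      Ideal.Quotient.algebraMap_eq, Ideal.Quotient.eq_zero_iff_mem.2 (Ideal.span_le.2 hSI hxI),
      zero_mul]

noncomputable def liftQuotient (I : Ideal A) (D : Derivation R A (A ⧸ I))
    (hD : ∀ x ∈ I, D x = 0) : Derivation R (A ⧸ I) (A ⧸ I) :=
  Derivation.mk'
    (((I.restrictScalars R).liftQ D.toLinearMap hD).comp
      (Submodule.Quotient.restrictScalarsEquiv R I).symm.toLinearMap)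
    (by
      intro x y
      obtain ⟨a, rfl⟩ := Ideal.Quotient.mk_surjective x
      obtain ⟨b, rfl⟩ := Ideal.Quotient.mk_surjective y
      change D (a * b) = _
      rw [D.leibniz, Algebra.smul_def, Algebra.smul_def, Ideal.Quotient.algebraMap_eq]
      rfl)

@[simp]
theorem liftQuotient_mk (I : Ideal A) (D : Derivation R A (A ⧸ I)) (hD : ∀ x ∈ I, D x = 0)
    (a : A) : liftQuotient I D hD (Ideal.Quotient.mk I a) = D a :=
  rfl

end Derivation

theorem xx_add_xx_add_xx : xx 0 + xx 1 + xx 2 = 0 := by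
  simp only [xx, ← map_add]
  exact Ideal.Quotient.eq_zero_iff_mem.2 (Ideal.subset_span rfl)

theorem derivation_apply_sum_sq (θ : Derivation ℝ SymV SymV) :
    θ (xx 0 ^ 2 + xx 1 ^ 2 + xx 2 ^ 2) =
      2 * (xx 0 * θ (xx 0 - xx 1) - xx 2 * θ (xx 1 - xx 2)) := by
  simp only [map_add, map_sub, θ.leibniz_pow, smul_eq_mul]
  linear_combination (2 * θ (xx 1)) * xx_add_xx_add_xx

theorem exists_derivation_sub_eq (α β : SymV) :
    ∃ θ : Derivation ℝ SymV SymV, θ (xx 0 - xx 1) = α ∧ θ (xx 1 - xx 2) = β := by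
  -- the values `a, a - α, a - α - β` of `θ` on `x₁, x₂, x₃` must sum to zero
  set a : SymV := (3⁻¹ : ℝ) • ((2 : ℝ) • α + β)
  let D : Derivation ℝ (MvPolynomial (Fin 3) ℝ) SymV := mkDerivation ℝ ![a, a - α, a - α - β]
  have hD : ∀ x ∈ relI, D x = 0 := by
    refine fun x hx ↦ Derivation.map_eq_zero_of_mem_span (I := relI) (S := {X 0 + X 1 + X 2})
      Ideal.subset_span D ?_ hx
    simp only [Set.mem_singleton_iff, forall_eq, D, map_add, mkDerivation_X]
    calc a + (a - α) + (a - α - β) = (3 : ℝ) • a - ((2 : ℝ) • α + β) := by module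
      _ = 0 := by rw [smul_inv_smul₀ three_ne_zero, sub_self]
  refine ⟨Derivation.liftQuotient relI D hD, ?_, ?_⟩ <;>
    simp only [xx, map_sub, Derivation.liftQuotient_mk, D, mkDerivation_X]
  exacts [sub_sub_cancel a α, sub_sub_cancel (a - α) β]

theorem span_f_eq_span_pair :
    Ideal.span ({(xx 0 - xx 1) * xx 0,
        (xx 0 - xx 2) * xx 0 + (xx 1 - xx 2) * xx 1,
        xx 0 + xx 1 + xx 2} : Set SymV) =
      Ideal.span {(xx 0 - xx 1) * xx 0, (xx 1 - xx 2) * xx 2} := by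
  have hf : (xx 0 - xx 2) * xx 0 + (xx 1 - xx 2) * xx 1 =
      (xx 0 - xx 1) * xx 0 - (xx 1 - xx 2) * xx 2 := by
    linear_combination (xx 1 - xx 2) * xx_add_xx_add_xx
  rw [hf, xx_add_xx_add_xx, Set.pair_comm, Set.insert_comm, Ideal.span_insert_zero,
    Ideal.span_pair_sub_right']

/-- For `h = (2,3,3)`, the ideal `𝔞(h) = {θ(Q) : θ ∈ D(A_h)}` with `Q = x₁²+x₂²+x₃²`
equals the ideal generated by `f_{2,1} = (x₁−x₂)x₁`,
`f_{3,2} = (x₁−x₃)x₁+(x₂−x₃)x₂` and `f_{3,3} = x₁+x₂+x₃` in `R = Sym(V*)`. -/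
theorem ideal_a_h_eq_span_f :
    {r : SymV | ∃ θ : Derivation ℝ SymV SymV,
        memD θ ∧ θ (xx 0 ^ 2 + xx 1 ^ 2 + xx 2 ^ 2) = r} =
      (Ideal.span ({(xx 0 - xx 1) * xx 0,
          (xx 0 - xx 2) * xx 0 + (xx 1 - xx 2) * xx 1,
          xx 0 + xx 1 + xx 2} : Set SymV) : Set SymV) := by
  ext r
  rw [Set.mem_ofPred_eq, SetLike.mem_coe, span_f_eq_span_pair, Ideal.mem_span_pair]
  constructor
  · rintro ⟨θ, ⟨h01, h12⟩, rfl⟩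
    obtain ⟨p, hp⟩ := Ideal.mem_span_singleton'.1 h01
    obtain ⟨q, hq⟩ := Ideal.mem_span_singleton'.1 h12
    exact ⟨2 * p, -2 * q, by rw [derivation_apply_sum_sq, ← hp, ← hq]; ring⟩
  · rintro ⟨u, v, rfl⟩
    obtain ⟨θ, h01, h12⟩ := exists_derivation_sub_eq (u * (xx 0 - xx 1)) (-v * (xx 1 - xx 2))
    refine ⟨(2⁻¹ : ℝ) • θ, ⟨?_, ?_⟩, ?_⟩
    · rw [Derivation.smul_apply, h01]
      exact Submodule.smul_of_tower_mem _ _ (Ideal.mem_span_singleton'.2 ⟨u, rfl⟩)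
    · rw [Derivation.smul_apply, h12]
      exact Submodule.smul_of_tower_mem _ _ (Ideal.mem_span_singleton'.2 ⟨-v, rfl⟩)
    · rw [Derivation.smul_apply, derivation_apply_sum_sq, h01, h12, two_mul, ← two_smul ℝ,
        inv_smul_smul₀ two_ne_zero]
      ring
end

section
/- The derivations ψ_{i,j} = Σ_{k=1}^{j} (∏_{ℓ=j+1}^{i} (x_k − x_ℓ))·(∂/∂x_k − (1/n)·(∂/∂x₁+...+∂/∂x_n)) satisfy ψ_{i,j}(x₁² + ... + x_n²) = 2·f_{i,j} in the ring R = ℝ[x₁,...,x_n]/(x₁+...+x_n), where f_{i,j} = Σ_{k=1}^{j} (∏_{ℓ=j+1}^{i} (x_k − x_ℓ)) x_k. -/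
open MvPolynomial Finset

/-- The polynomial `f_{i,j} = Σ_{k≤j} (Π_{j<ℓ≤i} (x_k − x_ℓ)) x_k` (0-indexed). -/
noncomputable def fpoly {n : ℕ} (i j : Fin n) : MvPolynomial (Fin n) ℝ :=
  ∑ k ∈ Finset.Iic j, (∏ l ∈ Finset.Ioc j i, (X k - X l)) * X k

/-- The derivation
`ψ_{i,j} = Σ_{k≤j} (Π_{j<ℓ≤i} (x_k − x_ℓ)) (∂/∂x_k − (1/n)(∂/∂x₁+⋯+∂/∂x_n))`
(0-indexed). -/
noncomputable def psi {n : ℕ} (i j : Fin n) :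
    Derivation ℝ (MvPolynomial (Fin n) ℝ) (MvPolynomial (Fin n) ℝ) :=
  ∑ k ∈ Finset.Iic j, (∏ l ∈ Finset.Ioc j i, (X k - X l) : MvPolynomial (Fin n) ℝ) •
    ((pderiv k : Derivation ℝ (MvPolynomial (Fin n) ℝ) (MvPolynomial (Fin n) ℝ)) -
      ((n : ℝ)⁻¹) •
        ∑ l : Fin n,
          (pderiv l : Derivation ℝ (MvPolynomial (Fin n) ℝ) (MvPolynomial (Fin n) ℝ)))

/-! Every `∂_k` sends `Q = Σ x_m²` to `2 x_k`, so `Σ_l ∂_l` sends `Q` to `2 Σ_l x_l`, which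
vanishes modulo `Σ_l x_l`. Hence modulo that linear form each corrected derivative
`∂_k − (1/n) Σ_l ∂_l` still sends `Q` to `2 x_k`, and `ψ_{i,j}`, a combination of these with
polynomial coefficients, sends `Q` to the same combination of the `2 x_k`, namely `2 f_{i,j}`. -/

theorem Derivation.sum_apply {ι R A M : Type*} [CommSemiring R] [CommSemiring A]
    [Algebra R A] [AddCommMonoid M] [Module R M] [Module A M] (s : Finset ι)
    (D : ι → Derivation R A M) (a : A) : (∑ k ∈ s, D k) a = ∑ k ∈ s, D k a := by
  simp only [← Derivation.coeFnAddMonoidHom_apply, map_sum, Finset.sum_apply]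

section SumOfSquares

variable {σ R : Type*} [Fintype σ] [CommRing R]

theorem pderiv_sum_X_sq (k : σ) :
    pderiv k (∑ m, (X m : MvPolynomial σ R) ^ 2) = 2 * X k := by
  classical
  rw [map_sum, Finset.sum_eq_single k]
  · simp
  · intro m _ hm
    simp [pderiv_X_of_ne hm]
  · simp

theorem sum_pderiv_sum_X_sq :
    ∑ l, pderiv l (∑ m, (X m : MvPolynomial σ R) ^ 2) = 2 * ∑ l, X l := by
  simp only [pderiv_sum_X_sq, Finset.mul_sum]

theorem mk_pderiv_sub_smul_sum_pderiv_sum_X_sq (k : σ) (c : R) :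
    Ideal.Quotient.mk (Ideal.span {∑ l, (X l : MvPolynomial σ R)})
        (((pderiv k : Derivation R (MvPolynomial σ R) (MvPolynomial σ R)) -
          c • ∑ l, (pderiv l : Derivation R (MvPolynomial σ R) (MvPolynomial σ R)))
            (∑ m, X m ^ 2)) =
      Ideal.Quotient.mk (Ideal.span {∑ l, (X l : MvPolynomial σ R)}) (2 * X k) := by
  rw [Ideal.Quotient.eq, Derivation.sub_apply, Derivation.smul_apply,
    Derivation.sum_apply, sum_pderiv_sum_X_sq, pderiv_sum_X_sq, sub_sub_cancel_left,
    neg_mem_iff, smul_eq_C_mul]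
  exact Ideal.mul_mem_left _ _ (Ideal.mul_mem_left _ _ (Ideal.mem_span_singleton_self _))

end SumOfSquares

theorem psi_apply_Q_eq_two_f_general {n : ℕ} (i j : Fin n) :
    Ideal.Quotient.mk (Ideal.span {(∑ k : Fin n, X k : MvPolynomial (Fin n) ℝ)})
        (psi i j (∑ k : Fin n, X k ^ 2)) =
      Ideal.Quotient.mk (Ideal.span {(∑ k : Fin n, X k : MvPolynomial (Fin n) ℝ)})
        (2 * fpoly i j) := by
  simp only [psi, fpoly, Derivation.sum_apply, Derivation.smul_apply, smul_eq_mul,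
    map_sum (Ideal.Quotient.mk _), map_mul, mk_pderiv_sub_smul_sum_pderiv_sum_X_sq,
    Finset.mul_sum]
  exact Finset.sum_congr rfl fun k _ => by ring

/-- `ψ_{i,j}(x₁² + ⋯ + x_n²) = 2 f_{i,j}` in `R = ℝ[x₁,…,x_n]/(x₁+⋯+x_n)`. -/
theorem psi_apply_Q_eq_two_f {n : ℕ} (i j : Fin n) (hji : j ≤ i) :
    Ideal.Quotient.mk (Ideal.span {(∑ k : Fin n, X k : MvPolynomial (Fin n) ℝ)})
        (psi i j (∑ k : Fin n, X k ^ 2)) =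
      Ideal.Quotient.mk (Ideal.span {(∑ k : Fin n, X k : MvPolynomial (Fin n) ℝ)})
        (2 * fpoly i j) :=
  psi_apply_Q_eq_two_f_general i j
end
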